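/- arXiv:1703.10393 — 2 statements merged into one kernel-verified Lean document; each statement's English description precedes it below -/
import Mathlib

section
/- For every prior density π with m_π(X; v_x) finite for all X, the joint quantity p_π(X,Y) = ∫ p_{v_x}(X|Θ) p_{v_y}(Y|Θ) π(Θ) dΘ factors as p_π(X,Y) = φ_U(Y|X) · m_π(W; v_w), where W = v_w(X/v_x + Y/v_y). Consequently the Bayesian predictive density satisfies φ_π(Y|X) = (m_π(W; v_w)/m_π(X; v_x)) · φ_U(Y|X). -/
open MeasureTheory Matrix

noncomputable section

abbrev Mat (r q : ℕ) := Fin r → Fin q → ℝ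

def frobSq {r q : ℕ} (A : Mat r q) : ℝ := ∑ i, ∑ j, (A i j) ^ 2

def pdfM (r q : ℕ) (v : ℝ) (Θ Z : Mat r q) : ℝ :=
  (2 * Real.pi * v) ^ (-((q * r : ℕ) : ℝ) / 2) * Real.exp (-frobSq (Z - Θ) / (2 * v))

def phiU (r q : ℕ) (vx vy : ℝ) (X Y : Mat r q) : ℝ :=
  (2 * Real.pi * (vx + vy)) ^ (-((q * r : ℕ) : ℝ) / 2) *
    Real.exp (-frobSq (Y - X) / (2 * (vx + vy)))

/-- marginal density m_π(Z; v) -/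
def marg (r q : ℕ) (v : ℝ) (pr : Mat r q → ℝ) (Z : Mat r q) : ℝ :=
  ∫ Θ, pdfM r q v Θ Z * pr Θ

/-- joint quantity p_π(X,Y) -/
def jointP (r q : ℕ) (vx vy : ℝ) (pr : Mat r q → ℝ) (X Y : Mat r q) : ℝ :=
  ∫ Θ, pdfM r q vx Θ X * pdfM r q vy Θ Y * pr Θ

/-- Bayesian predictive density φ_π -/
def phiBayes (r q : ℕ) (vx vy : ℝ) (pr : Mat r q → ℝ) (X Y : Mat r q) : ℝ :=
  jointP r q vx vy pr X Y / marg r q vx pr X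

lemma hwval (vx vy : ℝ) (hvx : 0 < vx) (hvy : 0 < vy) :
    (1 / vx + 1 / vy)⁻¹ = vx * vy / (vx + vy) := by
  field_simp
  ring

lemma scalar_id (vx vy x y θ : ℝ) (hvx : 0 < vx) (hvy : 0 < vy) :
    (x - θ) ^ 2 / (2 * vx) + (y - θ) ^ 2 / (2 * vy)
      = (y - x) ^ 2 / (2 * (vx + vy))
        + (vx * vy / (vx + vy) * (x / vx + y / vy) - θ) ^ 2
            / (2 * (vx * vy / (vx + vy))) := by
  have hs : vx + vy ≠ 0 := by positivity
  field_simp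
  ring

lemma pointwise_id (r q : ℕ) (vx vy : ℝ) (hvx : 0 < vx) (hvy : 0 < vy)
    (X Y Θ : Mat r q) :
    pdfM r q vx Θ X * pdfM r q vy Θ Y
      = phiU r q vx vy X Y *
        pdfM r q ((1 / vx + 1 / vy)⁻¹) Θ
          (fun i j => (1 / vx + 1 / vy)⁻¹ * (X i j / vx + Y i j / vy)) := by
  have hs : (0:ℝ) < vx + vy := by positivity
  have hw : (1 / vx + 1 / vy)⁻¹ = vx * vy / (vx + vy) := hwval vx vy hvx hvy
  have hwpos : (0:ℝ) < vx * vy / (vx + vy) := by positivity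
  rw [hw]
  -- constants
  have hc : (2 * Real.pi * vx) ^ (-((q * r : ℕ) : ℝ) / 2)
        * (2 * Real.pi * vy) ^ (-((q * r : ℕ) : ℝ) / 2)
      = (2 * Real.pi * (vx + vy)) ^ (-((q * r : ℕ) : ℝ) / 2)
        * (2 * Real.pi * (vx * vy / (vx + vy))) ^ (-((q * r : ℕ) : ℝ) / 2) := by
    rw [← Real.mul_rpow (by positivity) (by positivity),
        ← Real.mul_rpow (by positivity) (by positivity)]
    congr 1
    field_simp
  -- exponents
  have he : frobSq (X - Θ) / (2 * vx) + frobSq (Y - Θ) / (2 * vy)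
      = frobSq (Y - X) / (2 * (vx + vy))
        + frobSq ((fun i j => vx * vy / (vx + vy) * (X i j / vx + Y i j / vy)) - Θ)
            / (2 * (vx * vy / (vx + vy))) := by
    simp only [frobSq, Finset.sum_div, ← Finset.sum_add_distrib]
    refine Finset.sum_congr rfl fun i _ => Finset.sum_congr rfl fun j _ => ?_
    simpa using scalar_id vx vy (X i j) (Y i j) (Θ i j) hvx hvy
  unfold pdfM phiU
  rw [mul_mul_mul_comm, hc, ← Real.exp_add, mul_mul_mul_comm, ← Real.exp_add]
  congr 1
  simp only [neg_div, ← neg_add]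
  rw [he]

/-- p_π(X,Y) = φ_U(Y|X)·m_π(W; v_w) with W = v_w(X/v_x + Y/v_y), and hence
    φ_π(Y|X) = (m_π(W;v_w)/m_π(X;v_x))·φ_U(Y|X). -/
theorem jointP_factorization (r q : ℕ) (hr : 0 < r) (hrq : r ≤ q)
    (vx vy : ℝ) (hvx : 0 < vx) (hvy : 0 < vy)
    (pr : Mat r q → ℝ) (hmeas : Measurable pr) (hnn : ∀ Θ, 0 ≤ pr Θ)
    (hfin : ∀ X : Mat r q, Integrable (fun Θ => pdfM r q vx Θ X * pr Θ)) :
    ∀ X Y : Mat r q,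
      jointP r q vx vy pr X Y
          = phiU r q vx vy X Y *
            marg r q ((1 / vx + 1 / vy)⁻¹) pr
              (fun i j => (1 / vx + 1 / vy)⁻¹ * (X i j / vx + Y i j / vy)) ∧
      phiBayes r q vx vy pr X Y
          = (marg r q ((1 / vx + 1 / vy)⁻¹) pr
                (fun i j => (1 / vx + 1 / vy)⁻¹ * (X i j / vx + Y i j / vy))
              / marg r q vx pr X) * phiU r q vx vy X Y := by
  intro X Y
  have h1 : jointP r q vx vy pr X Y
      = phiU r q vx vy X Y *
        marg r q ((1 / vx + 1 / vy)⁻¹) pr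
          (fun i j => (1 / vx + 1 / vy)⁻¹ * (X i j / vx + Y i j / vy)) := by
    unfold jointP marg
    rw [← integral_const_mul]
    congr 1
    funext Θ
    rw [pointwise_id r q vx vy hvx hvy X Y Θ, mul_assoc]
  refine ⟨h1, ?_⟩
  unfold phiBayes
  rw [h1]
  ring
end
end

section
/- Let r ≥ 1 and q be integers with q ≥ r, and let α_1 ≥ α_2 ≥ ⋯ ≥ α_r ≥ 0 be real numbers with α_i ≤ (q + r − 2i − 1)/2 for each i = 1,…,r. Then for every i = 1,…,r, α_i² − (q + r − 2i − 1)α_i + 2 Σ_{j>i} α_j ≤ 0. -/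
private lemma alpha_key (r q : ℕ) (b : ℕ → ℝ)
    (hmono : ∀ i j, i ≤ j → j < r → b j ≤ b i)
    (hnn : ∀ i, i < r → 0 ≤ b i)
    (hub : ∀ i, i < r → b i ≤ ((q : ℝ) + r - 2 * (i + 1) - 1) / 2) :
    ∀ d i, i < r → r = i + d →
      2 * ∑ j ∈ Finset.Ico (i + 1) r, b j
        ≤ b i * (((q : ℝ) + r - 2 * (i + 1) - 1) - b i) := by
  intro d
  induction d with
  | zero => intro i hi hr; omega
  | succ d ih =>
    intro i hi hr
    rcases Nat.eq_zero_or_pos d with hd | hd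
    · subst hd
      have : Finset.Ico (i + 1) r = ∅ := by
        apply Finset.Ico_eq_empty; omega
      rw [this]
      simp only [Finset.sum_empty, mul_zero]
      have h1 := hnn i hi
      have h2 := hub i hi
      nlinarith
    · have hi1 : i + 1 < r := by omega
      have hsplit : ∑ j ∈ Finset.Ico (i + 1) r, b j
          = b (i + 1) + ∑ j ∈ Finset.Ico (i + 2) r, b j :=
        Finset.sum_eq_sum_Ico_succ_bot hi1 b
      have hIH := ih (i + 1) hi1 (by omega)
      have hm : b (i + 1) ≤ b i := hmono i (i + 1) (by omega) hi1
      have h2 := hub i hi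
      have h2' := hub (i + 1) hi1
      have h0 := hnn (i + 1) hi1
      rw [hsplit]
      push_cast at hIH h2 h2' ⊢
      nlinarith [mul_nonneg (sub_nonneg.2 hm)
        (sub_nonneg.2 (by linarith : b i + b (i+1) ≤ (q : ℝ) + r - 2 * (i + 1) - 1))]

/-- if q ≥ r ≥ 1 and α₁ ≥ … ≥ α_r ≥ 0 with α_i ≤ (q+r−2i−1)/2, then for every
    i, α_i² − (q+r−2i−1)α_i + 2Σ_{j>i} α_j ≤ 0.  (Indices are 1-based in the informal
    statement; `i : Fin r` corresponds to the index i+1.) -/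
theorem alpha_quadratic_nonpos (r q : ℕ) (hr : 0 < r) (hrq : r ≤ q)
    (α : Fin r → ℝ) (hanti : Antitone α) (hnn : ∀ i, 0 ≤ α i)
    (hub : ∀ i : Fin r, α i ≤ ((q : ℝ) + r - 2 * ((i : ℕ) + 1) - 1) / 2) :
    ∀ i : Fin r,
      (α i) ^ 2 - ((q : ℝ) + r - 2 * ((i : ℕ) + 1) - 1) * α i
        + 2 * ∑ j ∈ Finset.univ.filter (fun j => i < j), α j ≤ 0 := by
  intro i
  set b : ℕ → ℝ := fun j => if h : j < r then α ⟨j, h⟩ else 0 with hb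
  have hbv : ∀ (j : Fin r), b (j : ℕ) = α j := by
    intro j; simp [hb, j.isLt]
  have hkey := alpha_key r q b
    (by
      intro x y hxy hy
      have hx : x < r := lt_of_le_of_lt hxy hy
      rw [show b x = α ⟨x, hx⟩ by simp [hb, hx], show b y = α ⟨y, hy⟩ by simp [hb, hy]]
      exact hanti (by exact hxy))
    (by intro x hx; rw [show b x = α ⟨x, hx⟩ by simp [hb, hx]]; exact hnn _)
    (by intro x hx; rw [show b x = α ⟨x, hx⟩ by simp [hb, hx]]; exact hub ⟨x, hx⟩)
    (r - i) i i.isLt (by omega)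
  have hsum : ∑ j ∈ Finset.univ.filter (fun j => i < j), α j
      = ∑ j ∈ Finset.Ico ((i : ℕ) + 1) r, b j := by
    rw [Finset.sum_filter]
    have h1 : ∀ j : Fin r, (if i < j then α j else 0)
        = (fun n => if (i : ℕ) < n then b n else 0) (j : ℕ) := by
      intro j
      rw [← hbv j]
      simp only [Fin.lt_def]
    calc ∑ j : Fin r, (if i < j then α j else 0)
        = ∑ n ∈ Finset.range r, (if (i : ℕ) < n then b n else 0) := by
          rw [← Fin.sum_univ_eq_sum_range (fun n => if (i : ℕ) < n then b n else 0)]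
          exact Finset.sum_congr rfl (fun j _ => h1 j)
      _ = ∑ j ∈ (Finset.range r).filter (fun n => (i : ℕ) < n), b j :=
          (Finset.sum_filter _ _).symm
      _ = ∑ j ∈ Finset.Ico ((i : ℕ) + 1) r, b j := by
          congr 1
          ext n
          simp [Finset.mem_Ico]
          omega
  rw [hsum, hbv i] at *
  nlinarith [hkey]
end
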